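/- arXiv:2107.06040 — 2 statements merged into one kernel-verified Lean document; each statement's English description precedes it below -/
import Mathlib

section
/- There exists y₀ > 0 such that for all 0 < y < y₀, √(log(1/y²) + 1) - 1 ≤ Φ⁻¹(1 - y) ≤ √(log(1/y²)). -/
noncomputable def stdNormalPDF (u : ℝ) : ℝ :=
  (Real.sqrt (2 * Real.pi))⁻¹ * Real.exp (-u ^ 2 / 2)

noncomputable def stdNormalCDF (x : ℝ) : ℝ :=
  ∫ u in Set.Iic x, stdNormalPDF u

/-!
Write `L = log (1 / y ^ 2)`, so that `exp (-L / 2) = y`, and compare `1 - y = Φ (Φ⁻¹ (1 - y))`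
with `Φ` at the two endpoints using the strict monotonicity of `Φ`. At `B = √L` the Mills-ratio
bound `1 - Φ B ≤ φ B / B` gives `1 - Φ B ≤ exp (-B ^ 2 / 2) = y`. At `A = √(L + 1) - 1` the mass
of `[A, A + 1/2]` gives `1 - Φ A ≥ φ (A + 1/2) / 2 = y · exp (A / 2 - 1/8) / (2 √(2π))`, which is
at least `y` once `A` is large.
-/

open MeasureTheory Set Filter Real

lemma stdNormalPDF_eq_gaussianPDFReal : stdNormalPDF = ProbabilityTheory.gaussianPDFReal 0 1 := by
  funext x
  simp [stdNormalPDF, ProbabilityTheory.gaussianPDFReal, sq]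

lemma stdNormalPDF_pos (u : ℝ) : 0 < stdNormalPDF u := by
  rw [stdNormalPDF_eq_gaussianPDFReal]
  exact ProbabilityTheory.gaussianPDFReal_pos 0 1 u one_ne_zero

lemma integrable_stdNormalPDF : Integrable stdNormalPDF := by
  rw [stdNormalPDF_eq_gaussianPDFReal]
  exact ProbabilityTheory.integrable_gaussianPDFReal 0 1

lemma integral_stdNormalPDF : ∫ u, stdNormalPDF u = 1 := by
  rw [stdNormalPDF_eq_gaussianPDFReal]
  exact ProbabilityTheory.integral_gaussianPDFReal_eq_one 0 one_ne_zero

lemma stdNormalPDF_le_exp (u : ℝ) : stdNormalPDF u ≤ exp (-u ^ 2 / 2) := by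
  have h : 1 ≤ √(2 * π) := one_le_sqrt.2 (by linarith [pi_gt_three])
  exact mul_le_of_le_one_left (exp_pos _).le (inv_le_one_of_one_le₀ h)

lemma hasDerivAt_stdNormalPDF (u : ℝ) : HasDerivAt stdNormalPDF (-u * stdNormalPDF u) u := by
  have h : HasDerivAt (fun u : ℝ => -u ^ 2 / 2) (-u) u :=
    ((hasDerivAt_pow 2 u).neg.div_const 2).congr_deriv (by ring)
  exact (h.exp.const_mul _).congr_deriv (by rw [stdNormalPDF]; ring)

lemma tendsto_stdNormalPDF_atTop : Tendsto stdNormalPDF atTop (nhds 0) := by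
  have h : Tendsto (fun u : ℝ => -u ^ 2 / 2) atTop atBot :=
    (tendsto_neg_atTop_atBot.comp (tendsto_pow_atTop two_ne_zero)).atBot_div_const two_pos
  have hlim := (tendsto_exp_atBot.comp h).const_mul (√(2 * π))⁻¹
  rw [mul_zero] at hlim
  exact hlim

lemma one_sub_stdNormalCDF (x : ℝ) : 1 - stdNormalCDF x = ∫ u in Ioi x, stdNormalPDF u := by
  rw [← integral_stdNormalPDF, stdNormalCDF, ← intervalIntegral.integral_Iic_add_Ioi
    integrable_stdNormalPDF.integrableOn integrable_stdNormalPDF.integrableOn]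
  ring

lemma stdNormalCDF_strictMono : StrictMono stdNormalCDF := by
  intro a b hab
  have hdiff : stdNormalCDF b - stdNormalCDF a = ∫ u in a..b, stdNormalPDF u :=
    intervalIntegral.integral_Iic_sub_Iic integrable_stdNormalPDF.integrableOn
      integrable_stdNormalPDF.integrableOn
  have hpos : 0 < ∫ u in a..b, stdNormalPDF u :=
    intervalIntegral.intervalIntegral_pos_of_pos integrable_stdNormalPDF.intervalIntegrable
      stdNormalPDF_pos hab
  linarith

lemma one_sub_stdNormalCDF_le_div {B : ℝ} (hB : 0 < B) :
    1 - stdNormalCDF B ≤ stdNormalPDF B / B := by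
  have hderiv : ∀ u ∈ Ici B, HasDerivAt (fun u => -stdNormalPDF u) (u * stdNormalPDF u) u :=
    fun u _ => (hasDerivAt_stdNormalPDF u).neg.congr_deriv (by ring)
  have hnonneg : ∀ u ∈ Ioi B, 0 ≤ u * stdNormalPDF u :=
    fun u hu => mul_nonneg (hB.trans hu).le (stdNormalPDF_pos u).le
  have hlim : Tendsto (fun u => -stdNormalPDF u) atTop (nhds 0) := by
    simpa using tendsto_stdNormalPDF_atTop.neg
  have hint := integrableOn_Ioi_deriv_of_nonneg' hderiv hnonneg hlim
  have hval : ∫ u in Ioi B, u * stdNormalPDF u = stdNormalPDF B := by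
    rw [integral_Ioi_of_hasDerivAt_of_nonneg' hderiv hnonneg hlim]
    ring
  calc 1 - stdNormalCDF B = ∫ u in Ioi B, stdNormalPDF u := one_sub_stdNormalCDF B
    _ ≤ ∫ u in Ioi B, u * stdNormalPDF u / B := by
      refine setIntegral_mono_on integrable_stdNormalPDF.integrableOn (hint.div_const B)
        measurableSet_Ioi fun u hu => ?_
      rw [le_div_iff₀ hB, mul_comm u]
      exact mul_le_mul_of_nonneg_left hu.le (stdNormalPDF_pos u).le
    _ = stdNormalPDF B / B := by rw [integral_div, hval]

lemma one_sub_stdNormalCDF_le_exp {B : ℝ} (hB : 1 ≤ B) :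
    1 - stdNormalCDF B ≤ exp (-B ^ 2 / 2) :=
  calc 1 - stdNormalCDF B ≤ stdNormalPDF B / B := one_sub_stdNormalCDF_le_div (by linarith)
    _ ≤ stdNormalPDF B := div_le_self (stdNormalPDF_pos B).le hB
    _ ≤ exp (-B ^ 2 / 2) := stdNormalPDF_le_exp B

lemma mul_stdNormalPDF_le_one_sub_stdNormalCDF {A h : ℝ} (hA : 0 ≤ A) (hh : 0 ≤ h) :
    h * stdNormalPDF (A + h) ≤ 1 - stdNormalCDF A := by
  have hvol : volume.real (Ioc A (A + h)) = h := by simp [measureReal_def, hh]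
  have hle : ∀ x ∈ Ioc A (A + h), stdNormalPDF (A + h) ≤ stdNormalPDF x := by
    intro x hx
    refine mul_le_mul_of_nonneg_left (exp_le_exp.2 ?_) (by positivity)
    nlinarith [hx.1, hx.2]
  calc h * stdNormalPDF (A + h) = stdNormalPDF (A + h) * volume.real (Ioc A (A + h)) := by
        rw [hvol, mul_comm]
    _ ≤ ∫ u in Ioc A (A + h), stdNormalPDF u :=
        setIntegral_ge_of_const_le_real measurableSet_Ioc (by simp) hle
          integrable_stdNormalPDF.integrableOn
    _ ≤ ∫ u in Ioi A, stdNormalPDF u :=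
        setIntegral_mono_set integrable_stdNormalPDF.integrableOn
          (Eventually.of_forall fun x => (stdNormalPDF_pos x).le)
          (Eventually.of_forall fun _ hx => hx.1)
    _ = 1 - stdNormalCDF A := (one_sub_stdNormalCDF A).symm

lemma exp_neg_log_one_div_sq_div_two {y : ℝ} (hy : 0 < y) : exp (-log (1 / y ^ 2) / 2) = y := by
  rw [one_div, log_inv, log_pow, neg_neg, Nat.cast_ofNat, mul_div_cancel_left₀ _ two_ne_zero,
    exp_log hy]

lemma two_mul_le_log_one_div_sq {y c : ℝ} (hy : 0 < y) (hyc : y ≤ exp (-c)) :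
    2 * c ≤ log (1 / y ^ 2) := by
  have h := (log_le_iff_le_exp hy).2 hyc
  rw [one_div, log_inv, log_pow, Nat.cast_ofNat]
  linarith

lemma one_sub_le_stdNormalCDF_sqrt_log {y : ℝ} (hy : 0 < y) (hL : 1 ≤ log (1 / y ^ 2)) :
    1 - y ≤ stdNormalCDF √(log (1 / y ^ 2)) := by
  have h := one_sub_stdNormalCDF_le_exp (one_le_sqrt.2 hL)
  rw [sq_sqrt (by linarith), exp_neg_log_one_div_sq_div_two hy] at h
  linarith

lemma stdNormalCDF_sqrt_log_add_one_sub_one_le {y : ℝ} (hy : 0 < y)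
    (hL : 143 ≤ log (1 / y ^ 2)) : stdNormalCDF (√(log (1 / y ^ 2) + 1) - 1) ≤ 1 - y := by
  set L := log (1 / y ^ 2)
  set A := √(L + 1) - 1 with hA
  have hA11 : 11 ≤ A := by
    have : 12 ≤ √(L + 1) := (le_sqrt' (by norm_num)).2 (by linarith)
    linarith
  have hAsq : (A + 1) ^ 2 = L + 1 := by rw [hA, sub_add_cancel, sq_sqrt (by linarith)]
  have hexp : exp (-(A + 1 / 2) ^ 2 / 2) = y * exp (A / 2 - 1 / 8) := by
    rw [← exp_neg_log_one_div_sq_div_two hy, ← exp_add]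
    congr 1
    linear_combination (-1 / 2 : ℝ) * hAsq
  have hconst : 2 * √(2 * π) ≤ exp (A / 2 - 1 / 8) := by
    have : √(2 * π) ≤ 3 := (sqrt_le_left (by norm_num)).2 (by linarith [pi_lt_four])
    linarith [add_one_le_exp (A / 2 - 1 / 8)]
  have hy_le : y ≤ 1 / 2 * stdNormalPDF (A + 1 / 2) := by
    rw [stdNormalPDF, hexp, show 1 / 2 * ((√(2 * π))⁻¹ * (y * exp (A / 2 - 1 / 8)))
      = y * (exp (A / 2 - 1 / 8) / (2 * √(2 * π))) by field_simp]
    exact le_mul_of_one_le_right hy.le ((one_le_div (by positivity)).2 hconst)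
  linarith [mul_stdNormalPDF_le_one_sub_stdNormalCDF (by linarith : 0 ≤ A)
    (by norm_num : (0 : ℝ) ≤ 1 / 2)]

theorem stmt_6_general (Phiinv : ℝ → ℝ)
    (hright : ∀ y ∈ Set.Ioo (0 : ℝ) 1, stdNormalCDF (Phiinv y) = y) :
    ∃ y₀ > (0 : ℝ), ∀ y : ℝ, 0 < y → y < y₀ →
      Real.sqrt (Real.log (1 / y ^ 2) + 1) - 1 ≤ Phiinv (1 - y) ∧
      Phiinv (1 - y) ≤ Real.sqrt (Real.log (1 / y ^ 2)) := by
  refine ⟨exp (-72), exp_pos _, fun y hy hyy₀ => ?_⟩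
  have hL : 144 ≤ log (1 / y ^ 2) := by linarith [two_mul_le_log_one_div_sq hy hyy₀.le]
  have hy1 : y < 1 := hyy₀.trans (exp_lt_one_iff.2 (by norm_num))
  have hΦ : stdNormalCDF (Phiinv (1 - y)) = 1 - y := hright _ ⟨by linarith, by linarith⟩
  constructor
  · rw [← stdNormalCDF_strictMono.le_iff_le, hΦ]
    exact stdNormalCDF_sqrt_log_add_one_sub_one_le hy (by linarith)
  · rw [← stdNormalCDF_strictMono.le_iff_le, hΦ]
    exact one_sub_le_stdNormalCDF_sqrt_log hy (by linarith)

theorem stmt_6 (Phiinv : ℝ → ℝ)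
    (hleft : ∀ x : ℝ, Phiinv (stdNormalCDF x) = x)
    (hright : ∀ y ∈ Set.Ioo (0 : ℝ) 1, stdNormalCDF (Phiinv y) = y) :
    ∃ y₀ > (0 : ℝ), ∀ y : ℝ, 0 < y → y < y₀ →
      Real.sqrt (Real.log (1 / y ^ 2) + 1) - 1 ≤ Phiinv (1 - y) ∧
      Phiinv (1 - y) ≤ Real.sqrt (Real.log (1 / y ^ 2)) :=
  stmt_6_general Phiinv hright
end

section
/- If (X,Y) is bivariate standard normal with correlation ρ, |ρ| ≤ δ < 1, then as c → ∞, P(X > c, Y > c) is asymptotically equivalent to (1+ρ)^{3/2} (2π√(1-ρ) c²)^{-1} exp(-c²/(1+ρ)); in particular P(X > c, Y > c) = o(exp(-c²/(1+δ') )) for any δ' > δ. -/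
/-!
Substitute `x = c + s / c`, `y = c + t / c` in `P(X > c, Y > c) = ∫∫_{x, y > c} f`. Expanding the
quadratic form, `f (c + s / c, c + t / c) = f (c, c) · exp (-(s + t) / (1 + ρ) - Q(s, t) / (2 (1 - ρ²) c²))`
with `Q ≥ 0`, so `P(X > c, Y > c) = c⁻² f (c, c) I(c)`, where `I(c)` is the integral of this kernel over the
positive quadrant. By dominated convergence `I(c) → ∫∫ exp (-(s + t) / (1 + ρ)) = (1 + ρ)²`, and
`c⁻² f (c, c) (1 + ρ)²` is exactly the claimed equivalent. The `o(exp (-c² / (1 + δ')))` bound follows since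
`1 + ρ ≤ 1 + δ'`, leaving a factor `c⁻² → 0`.
-/

open MeasureTheory Filter Set Topology Real
open scoped Pointwise

lemma exp_neg_mul_add (b x y : ℝ) : exp (-b * (x + y)) = exp (-b * x) * exp (-b * y) := by
  rw [← exp_add]; ring_nf

lemma integrableOn_exp_neg_mul_add_Ioi_prod_Ioi {b : ℝ} (hb : 0 < b) :
    IntegrableOn (fun z : ℝ × ℝ => exp (-b * (z.1 + z.2))) (Ioi 0 ×ˢ Ioi 0) := by
  simp_rw [exp_neg_mul_add]
  rw [IntegrableOn, Measure.volume_eq_prod, ← Measure.prod_restrict]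
  exact (exp_neg_integrableOn_Ioi 0 hb).mul_prod (exp_neg_integrableOn_Ioi 0 hb)

lemma setIntegral_exp_neg_mul_add_Ioi_prod_Ioi {b : ℝ} (hb : 0 < b) :
    ∫ z in Ioi 0 ×ˢ Ioi 0, exp (-b * (z.1 + z.2)) = (b ^ 2)⁻¹ := by
  have h1 : ∫ x in Ioi 0, exp (-b * x) = b⁻¹ := by
    rw [integral_exp_mul_Ioi (neg_lt_zero.2 hb)]; simp
  simp_rw [exp_neg_mul_add]
  rw [Measure.volume_eq_prod, setIntegral_prod_mul (fun x => exp (-b * x)) (fun y => exp (-b * y)),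
    h1, sq, mul_inv]

lemma tendsto_inv_sq_mul_exp_div_exp {a b : ℝ} (ha : 0 < a) (hab : a ≤ b) :
    Tendsto (fun c : ℝ => (c ^ 2)⁻¹ * exp (-c ^ 2 / a) / exp (-c ^ 2 / b)) atTop (𝓝 0) := by
  have hinv : Tendsto (fun c : ℝ => (c ^ 2)⁻¹) atTop (𝓝 0) :=
    tendsto_inv_atTop_zero.comp (tendsto_pow_atTop two_ne_zero)
  refine squeeze_zero (fun c => by positivity) (fun c => ?_) hinv
  rw [mul_div_assoc]
  refine mul_le_of_le_one_right (by positivity) ?_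
  rw [div_le_one (exp_pos _), exp_le_exp, neg_div, neg_div, neg_le_neg_iff]
  exact div_le_div_of_nonneg_left (sq_nonneg c) ha hab

lemma sq_sub_two_mul_mul_add_sq_nonneg {ρ : ℝ} (hρ : |ρ| ≤ 1) (x y : ℝ) :
    0 ≤ x ^ 2 - 2 * ρ * x * y + y ^ 2 := by
  obtain ⟨h₁, h₂⟩ := abs_le.1 hρ
  nlinarith [mul_nonneg (sub_nonneg.2 h₂) (sq_nonneg (x + y)),
    mul_nonneg (neg_le_iff_add_nonneg.1 h₁) (sq_nonneg (x - y))]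

lemma smul_Ioi_prod_Ioi_zero {c : ℝ} (hc : 0 < c) :
    c • (Ioi (0 : ℝ) ×ˢ Ioi (0 : ℝ)) = Ioi 0 ×ˢ Ioi 0 := by
  ext z
  simp [mem_smul_set_iff_inv_smul_mem₀ hc.ne', hc]

lemma setIntegral_Ioi_prod_Ioi_eq (F : ℝ × ℝ → ℝ) {c : ℝ} (hc : 0 < c) :
    ∫ z in Ioi c ×ˢ Ioi c, F z =
      (c ^ 2)⁻¹ * ∫ z in Ioi 0 ×ˢ Ioi 0, F (c⁻¹ * z.1 + c, c⁻¹ * z.2 + c) := by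
  change _ = _ * ∫ z in _, F (c⁻¹ • z + (c, c))
  have htrans := (measurePreserving_add_right volume (c, c)).setIntegral_preimage_emb
    (measurableEmbedding_addRight (c, c)) F (Ioi c ×ˢ Ioi c)
  have hpre : (· + (c, c)) ⁻¹' (Ioi c ×ˢ Ioi c) = Ioi 0 ×ˢ Ioi 0 := by
    ext z
    simp
  rw [Measure.setIntegral_comp_smul_of_pos volume (fun z => F (z + (c, c))) _ (inv_pos.2 hc),
    smul_Ioi_prod_Ioi_zero (inv_pos.2 hc), ← hpre, htrans]
  simp only [Module.finrank_prod, Module.finrank_self, Nat.reduceAdd, inv_pow, inv_inv, smul_eq_mul]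
  field_simp

noncomputable def bivariateNormalPDF (ρ x y : ℝ) : ℝ :=
  (2 * π * √(1 - ρ ^ 2))⁻¹ * exp (-(x ^ 2 - 2 * ρ * x * y + y ^ 2) / (2 * (1 - ρ ^ 2)))

noncomputable def tailKernel (ρ c : ℝ) (z : ℝ × ℝ) : ℝ :=
  exp (-(1 + ρ)⁻¹ * (z.1 + z.2) -
    (z.1 ^ 2 - 2 * ρ * z.1 * z.2 + z.2 ^ 2) / (2 * (1 - ρ ^ 2)) * (c ^ 2)⁻¹)

section
variable {ρ : ℝ}

lemma one_sub_sq_pos (hρ : |ρ| < 1) : 0 < 1 - ρ ^ 2 := by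
  rw [sub_pos, sq_lt_one_iff_abs_lt_one]; exact hρ

lemma bivariateNormalPDF_diag (hρ : |ρ| < 1) (c : ℝ) :
    bivariateNormalPDF ρ c c = (2 * π * √(1 - ρ ^ 2))⁻¹ * exp (-c ^ 2 / (1 + ρ)) := by
  have hp : 1 + ρ ≠ 0 := by linarith [neg_abs_le ρ]
  have hm : 1 - ρ ^ 2 ≠ 0 := (one_sub_sq_pos hρ).ne'
  unfold bivariateNormalPDF
  congr 2
  field_simp
  ring

lemma bivariateNormalPDF_inv_mul_add (hρ : |ρ| < 1) {c : ℝ} (hc : c ≠ 0) (z : ℝ × ℝ) :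
    bivariateNormalPDF ρ (c⁻¹ * z.1 + c) (c⁻¹ * z.2 + c) =
      bivariateNormalPDF ρ c c * tailKernel ρ c z := by
  have hp : 1 + ρ ≠ 0 := by linarith [neg_abs_le ρ]
  have hm : 1 - ρ ^ 2 ≠ 0 := (one_sub_sq_pos hρ).ne'
  unfold bivariateNormalPDF tailKernel
  rw [mul_assoc _ (exp _), ← exp_add]
  congr 2
  field_simp
  ring

lemma tailKernel_le (hρ : |ρ| < 1) (c : ℝ) (z : ℝ × ℝ) :
    tailKernel ρ c z ≤ exp (-(1 + ρ)⁻¹ * (z.1 + z.2)) := by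
  refine exp_le_exp.2 (sub_le_self _ (mul_nonneg (div_nonneg ?_ ?_) (by positivity)))
  · exact sq_sub_two_mul_mul_add_sq_nonneg hρ.le _ _
  · linarith [one_sub_sq_pos hρ]

lemma tendsto_tailKernel (z : ℝ × ℝ) :
    Tendsto (fun c => tailKernel ρ c z) atTop (𝓝 (exp (-(1 + ρ)⁻¹ * (z.1 + z.2)))) := by
  have hinv : Tendsto (fun c : ℝ => (c ^ 2)⁻¹) atTop (𝓝 0) :=
    tendsto_inv_atTop_zero.comp (tendsto_pow_atTop two_ne_zero)
  have h := (continuous_exp.tendsto _).comp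
    ((tendsto_const_nhds (x := -(1 + ρ)⁻¹ * (z.1 + z.2))).sub (hinv.const_mul
      ((z.1 ^ 2 - 2 * ρ * z.1 * z.2 + z.2 ^ 2) / (2 * (1 - ρ ^ 2)))))
  rw [mul_zero, sub_zero] at h
  exact h

lemma tendsto_setIntegral_tailKernel (hρ : |ρ| < 1) :
    Tendsto (fun c => ∫ z in Ioi 0 ×ˢ Ioi 0, tailKernel ρ c z) atTop (𝓝 ((1 + ρ) ^ 2)) := by
  have hb : 0 < (1 + ρ)⁻¹ := inv_pos.2 (by linarith [neg_abs_le ρ])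
  have hmeas (c : ℝ) : AEStronglyMeasurable (tailKernel ρ c) (volume.restrict (Ioi 0 ×ˢ Ioi 0)) :=
    (by unfold tailKernel; fun_prop : Continuous (tailKernel ρ c)).aestronglyMeasurable
  have h := tendsto_integral_filter_of_dominated_convergence _ (.of_forall hmeas)
    (.of_forall fun c => .of_forall fun z =>
      (Real.norm_of_nonneg (exp_pos _).le).trans_le (tailKernel_le hρ c z))
    (integrableOn_exp_neg_mul_add_Ioi_prod_Ioi hb) (.of_forall tendsto_tailKernel)
  rwa [setIntegral_exp_neg_mul_add_Ioi_prod_Ioi hb, inv_pow, inv_inv] at h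

lemma tail_asymptote_eq (hρ : |ρ| < 1) (c : ℝ) :
    (1 + ρ) ^ ((3 : ℝ) / 2) * (2 * π * √(1 - ρ) * c ^ 2)⁻¹ * exp (-c ^ 2 / (1 + ρ)) =
      (c ^ 2)⁻¹ * bivariateNormalPDF ρ c c * (1 + ρ) ^ 2 := by
  have hp : 0 < 1 + ρ := by linarith [neg_abs_le ρ]
  have hm : 0 < 1 - ρ := by linarith [le_abs_self ρ]
  have hsqrt : √(1 - ρ ^ 2) = √(1 - ρ) * √(1 + ρ) := by
    rw [← Real.sqrt_mul hm.le]; ring_nf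
  have hpow : (1 + ρ) ^ ((3 : ℝ) / 2) = (1 + ρ) ^ 2 / √(1 + ρ) := by
    rw [eq_div_iff (Real.sqrt_ne_zero'.2 hp), Real.sqrt_eq_rpow, ← Real.rpow_add hp]
    norm_num
  rw [bivariateNormalPDF_diag hρ, hsqrt, hpow]
  field_simp

end

theorem stmt_15_general {Ω : Type*} [MeasureSpace Ω]
    (X Y : Ω → ℝ) (ρ δ : ℝ) (hρδ : |ρ| ≤ δ) (hδ : δ < 1)
    (f : ℝ → ℝ → ℝ)
    (hf : ∀ x y, f x y = (2 * Real.pi * Real.sqrt (1 - ρ ^ 2))⁻¹ *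
      Real.exp (-(x ^ 2 - 2 * ρ * x * y + y ^ 2) / (2 * (1 - ρ ^ 2))))
    (hJoint : ∀ s : Set (ℝ × ℝ), MeasurableSet s →
      ((volume : Measure Ω) {ω | (X ω, Y ω) ∈ s}).toReal = ∫ z in s, f z.1 z.2) :
    Tendsto (fun c : ℝ =>
        ((volume : Measure Ω) {ω | X ω > c ∧ Y ω > c}).toReal /
          ((1 + ρ) ^ ((3 : ℝ) / 2) *
            (2 * Real.pi * Real.sqrt (1 - ρ) * c ^ 2)⁻¹ *
            Real.exp (-c ^ 2 / (1 + ρ))))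
      atTop (nhds 1) ∧
    ∀ δ' : ℝ, δ < δ' →
      Tendsto (fun c : ℝ =>
          ((volume : Measure Ω) {ω | X ω > c ∧ Y ω > c}).toReal /
            Real.exp (-c ^ 2 / (1 + δ')))
        atTop (nhds 0) := by
  have hρ : |ρ| < 1 := hρδ.trans_lt hδ
  have hp : 0 < 1 + ρ := by linarith [neg_abs_le ρ]
  have hI := tendsto_setIntegral_tailKernel hρ
  have htail : ∀ c > 0, ((volume : Measure Ω) {ω | X ω > c ∧ Y ω > c}).toReal =
      (c ^ 2)⁻¹ * bivariateNormalPDF ρ c c * ∫ z in Ioi 0 ×ˢ Ioi 0, tailKernel ρ c z := by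
    intro c hc
    have hset : {ω | X ω > c ∧ Y ω > c} = {ω | (X ω, Y ω) ∈ Ioi c ×ˢ Ioi c} := rfl
    have hpdf : f = bivariateNormalPDF ρ := funext₂ hf
    rw [hset, hJoint _ (measurableSet_Ioi.prod measurableSet_Ioi),
      setIntegral_Ioi_prod_Ioi_eq _ hc, hpdf]
    simp_rw [bivariateNormalPDF_inv_mul_add hρ hc.ne', integral_const_mul, mul_assoc]
  have hscale_pos : ∀ c > 0, 0 < (c ^ 2)⁻¹ * bivariateNormalPDF ρ c c := fun c hc => by
    rw [bivariateNormalPDF_diag hρ]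
    have := one_sub_sq_pos hρ
    positivity
  constructor
  · have h := hI.div_const ((1 + ρ) ^ 2)
    rw [div_self (pow_ne_zero 2 hp.ne')] at h
    refine h.congr' ?_
    filter_upwards [eventually_gt_atTop 0] with c hc
    rw [htail c hc, tail_asymptote_eq hρ, mul_div_mul_left _ _ (hscale_pos c hc).ne']
  · intro δ' hδ'
    have h := (hI.const_mul (2 * π * √(1 - ρ ^ 2))⁻¹).mul
      (tendsto_inv_sq_mul_exp_div_exp hp (by linarith [le_abs_self ρ]) (b := 1 + δ'))
    rw [mul_zero] at h
    refine h.congr' ?_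
    filter_upwards [eventually_gt_atTop 0] with c hc
    rw [htail c hc, bivariateNormalPDF_diag hρ]
    ring

theorem stmt_15 {Ω : Type*} [MeasureSpace Ω] [IsProbabilityMeasure (volume : Measure Ω)]
    (X Y : Ω → ℝ) (ρ δ : ℝ) (hρδ : |ρ| ≤ δ) (hδ : δ < 1)
    (f : ℝ → ℝ → ℝ)
    (hf : ∀ x y, f x y = (2 * Real.pi * Real.sqrt (1 - ρ ^ 2))⁻¹ *
      Real.exp (-(x ^ 2 - 2 * ρ * x * y + y ^ 2) / (2 * (1 - ρ ^ 2))))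
    (hJoint : ∀ s : Set (ℝ × ℝ), MeasurableSet s →
      ((volume : Measure Ω) {ω | (X ω, Y ω) ∈ s}).toReal = ∫ z in s, f z.1 z.2) :
    Tendsto (fun c : ℝ =>
        ((volume : Measure Ω) {ω | X ω > c ∧ Y ω > c}).toReal /
          ((1 + ρ) ^ ((3 : ℝ) / 2) *
            (2 * Real.pi * Real.sqrt (1 - ρ) * c ^ 2)⁻¹ *
            Real.exp (-c ^ 2 / (1 + ρ))))
      atTop (nhds 1) ∧
    ∀ δ' : ℝ, δ < δ' →
      Tendsto (fun c : ℝ =>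
          ((volume : Measure Ω) {ω | X ω > c ∧ Y ω > c}).toReal /
            Real.exp (-c ^ 2 / (1 + δ')))
        atTop (nhds 0) :=
  stmt_15_general X Y ρ δ hρδ hδ f hf hJoint
end
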